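/- arXiv:1405.5644 — 9 statements merged into one kernel-verified Lean document; each statement's English description precedes it below -/
import Mathlib

section
/- Let k be a field, R a linearly ordered set, and I an interval in R. Then the interval module k_I is indecomposable: if k_I = A ⊕ B for submodules A and B (direct sum computed pointwise), then A = 0 or B = 0. -/
/-! Persistence modules over a linearly ordered indexing set. -/

universe u v w w₁ w₂ w₃

/-- A persistence module over a linearly ordered set `R`, with values in
`k`-vector spaces: vector spaces `space t` together with structure maps
`map : space s →ₗ[k] space t` for `s ≤ t`, functorial in the index. -/
structure PersMod (k : Type u) [Field k] (R : Type v) [LinearOrder R] where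
  space : R → Type w
  [addCommGroup : ∀ t, AddCommGroup (space t)]
  [module : ∀ t, Module k (space t)]
  map : ∀ {s t : R}, s ≤ t → (space s →ₗ[k] space t)
  map_refl : ∀ t : R, map (le_refl t) = LinearMap.id
  map_comp : ∀ {s u t : R} (h₁ : s ≤ u) (h₂ : u ≤ t),
      map h₂ ∘ₗ map h₁ = map (h₁.trans h₂)

attribute [instance] PersMod.addCommGroup PersMod.module

variable {k : Type u} [Field k] {R : Type v} [LinearOrder R]

lemma PersMod.map_map (V : PersMod.{u, v, w₁} k R) {s u' t : R} (h₁ : s ≤ u') (h₂ : u' ≤ t)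
    (x : V.space s) : V.map h₂ (V.map h₁ x) = V.map (h₁.trans h₂) x := by
  have h := LinearMap.congr_fun (V.map_comp h₁ h₂) x
  simpa using h

/-- A morphism of persistence modules (a natural transformation). -/
structure PersHom (V : PersMod.{u, v, w₁} k R) (W : PersMod.{u, v, w₂} k R) where
  app : ∀ t : R, V.space t →ₗ[k] W.space t
  natural : ∀ {s t : R} (h : s ≤ t), app t ∘ₗ V.map h = W.map h ∘ₗ app s

/-- The identity morphism of persistence modules. -/
def PersHom.id (V : PersMod.{u, v, w₁} k R) : PersHom V V where
  app _ := LinearMap.id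
  natural _ := by simp

/-- Composition of morphisms of persistence modules. -/
def PersHom.comp {V : PersMod.{u, v, w₁} k R} {W : PersMod.{u, v, w₂} k R}
    {X : PersMod.{u, v, w₃} k R} (ψ : PersHom W X) (φ : PersHom V W) : PersHom V X where
  app t := (ψ.app t) ∘ₗ (φ.app t)
  natural {s t} h := by
    rw [LinearMap.comp_assoc, φ.natural h, ← LinearMap.comp_assoc, ψ.natural h,
      LinearMap.comp_assoc]

/-- A persistence module is ephemeral if all structure maps `ρ_{ts}` with `s < t`
vanish. -/
def Ephemeral (V : PersMod.{u, v, w₁} k R) : Prop :=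
  ∀ ⦃s t : R⦄ (h : s < t), V.map h.le = 0

/-- A morphism of persistence modules is a weak isomorphism if its kernel and its
cokernel (both computed pointwise) are ephemeral persistence modules. -/
def IsWeakIso {V : PersMod.{u, v, w₁} k R} {W : PersMod.{u, v, w₂} k R}
    (φ : PersHom V W) : Prop :=
  (∀ ⦃s t : R⦄ (h : s < t) (x : V.space s), φ.app s x = 0 → V.map h.le x = 0) ∧
  (∀ ⦃s t : R⦄ (h : s < t) (y : W.space s), W.map h.le y ∈ LinearMap.range (φ.app t))

/-- An interval in `R`: a nonempty set that contains every element lying between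
two of its members. -/
def IsInterval (I : Set R) : Prop :=
  I.Nonempty ∧ ∀ ⦃s u t : R⦄, s ∈ I → t ∈ I → s ≤ u → u ≤ t → u ∈ I

/-- The fibre of the interval module `k_I` at `t`: all of `k` if `t ∈ I`, and `0`
otherwise; realized as a submodule of `k`. -/
def intervalSpace (k : Type u) [Field k] {R : Type v} [LinearOrder R]
    (I : Set R) (t : R) : Submodule k k where
  carrier := {x : k | t ∉ I → x = 0}
  add_mem' := by
    intro a b ha hb
    intro ht
    rw [ha ht, hb ht, add_zero]
  zero_mem' := fun _ => rfl
  smul_mem' := by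
    intro c a ha ht
    rw [ha ht, smul_zero]

open Classical in
/-- The interval module `k_I`: one-dimensional (equal to `k`) over the points of
`I` and zero elsewhere, with structure maps equal to the identity from a point of
`I` to a later point of `I`, and zero otherwise. -/
noncomputable def intervalModule (k : Type u) [Field k] (R : Type v) [LinearOrder R]
    (I : Set R) : PersMod.{u, v, u} k R where
  space t := intervalSpace k I t
  map {s t} h :=
    { toFun := fun x => ⟨if Set.Icc s t ⊆ I then (x : k) else 0, by
        intro ht
        split_ifs with hIcc
        · exact absurd (hIcc ⟨h, le_refl t⟩) ht
        · rfl⟩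
      map_add' := by
        intro x y
        apply Subtype.ext
        split_ifs <;> simp
      map_smul' := by
        intro c x
        apply Subtype.ext
        split_ifs <;> simp }
  map_refl t := by
    apply LinearMap.ext
    intro x
    apply Subtype.ext
    simp only [LinearMap.coe_mk, AddHom.coe_mk, LinearMap.id_coe, id_eq]
    split_ifs with hIcc
    · rfl
    · rw [Set.Icc_self] at hIcc
      exact (x.2 (fun ht => hIcc (by simpa using ht))).symm
  map_comp {s u t} h₁ h₂ := by
    apply LinearMap.ext
    intro x
    apply Subtype.ext
    simp only [LinearMap.coe_comp, Function.comp_apply, LinearMap.coe_mk, AddHom.coe_mk]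
    by_cases h12 : Set.Icc s u ⊆ I ∧ Set.Icc u t ⊆ I
    · have hst : Set.Icc s t ⊆ I := by
        rw [← Set.Icc_union_Icc_eq_Icc h₁ h₂]
        exact Set.union_subset h12.1 h12.2
      rw [if_pos h12.1, if_pos h12.2, if_pos hst]
    · have hst : ¬ Set.Icc s t ⊆ I := by
        intro hst
        exact h12 ⟨fun y hy => hst ⟨hy.1, hy.2.trans h₂⟩, fun y hy => hst ⟨h₁.trans hy.1, hy.2⟩⟩
      rw [if_neg hst]
      by_cases h2 : Set.Icc u t ⊆ I
      · rw [if_pos h2]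
        have h1 : ¬ Set.Icc s u ⊆ I := fun h1 => h12 ⟨h1, h2⟩
        rw [if_neg h1]
      · rw [if_neg h2]
/-! Observable morphisms. -/

/-- An observable morphism (`ob-morphism`) of persistence modules: a family of
linear maps `φ_{ts} : V_s → W_t` defined for `s < t`, compatible with the
structure maps in the sense that `φ_{ts} = σ_{tv} ∘ φ_{vu} ∘ ρ_{us}` whenever
`s ≤ u < v ≤ t`. -/
structure ObHom (V : PersMod.{u, v, w₁} k R) (W : PersMod.{u, v, w₂} k R) where
  map : ∀ {s t : R}, s < t → (V.space s →ₗ[k] W.space t)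
  compat : ∀ {s u v t : R} (h₁ : s ≤ u) (h₂ : u < v) (h₃ : v ≤ t),
      map (lt_of_le_of_lt h₁ (lt_of_lt_of_le h₂ h₃)) = W.map h₃ ∘ₗ map h₂ ∘ₗ V.map h₁

/-- The ob-morphism `φ° = (φ_t ∘ ρ_{ts})_{s<t}` induced by an ordinary morphism of
persistence modules; this is the action of the quotient functor `π : Pers → Ob` on
morphisms. -/
def PersHom.ob {V : PersMod.{u, v, w₁} k R} {W : PersMod.{u, v, w₂} k R}
    (φ : PersHom V W) : ObHom V W where
  map {s t} h := φ.app t ∘ₗ V.map h.le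
  compat {s u v t} h₁ h₂ h₃ := by
    apply LinearMap.ext
    intro x
    simp only [LinearMap.coe_comp, Function.comp_apply]
    have hn := LinearMap.congr_fun (φ.natural h₃) ((V.map h₂.le) (V.map h₁ x))
    simp only [LinearMap.coe_comp, Function.comp_apply] at hn
    rw [← hn, V.map_map h₂.le h₃, V.map_map h₁ (h₂.le.trans h₃)]

/-- The ob-identity `1°_V = (ρ_{ts})_{s<t}` of a persistence module. -/
def obId (V : PersMod.{u, v, w₁} k R) : ObHom V V where
  map {s t} h := V.map h.le
  compat {s u v t} h₁ h₂ h₃ := by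
    rw [V.map_comp h₁ h₂.le, V.map_comp (h₁.trans h₂.le) h₃]

/-- `ψ` is a two-sided observable inverse of `φ`: both composites (computed, as in
the observable category over a dense order, through any intermediate index `u`)
equal the respective ob-identities. -/
def ObInverse {V : PersMod.{u, v, w₁} k R} {W : PersMod.{u, v, w₂} k R}
    (φ : ObHom V W) (ψ : ObHom W V) : Prop :=
  (∀ ⦃s u t : R⦄ (h₁ : s < u) (h₂ : u < t), ψ.map h₂ ∘ₗ φ.map h₁ = V.map (h₁.trans h₂).le) ∧
  (∀ ⦃s u t : R⦄ (h₁ : s < u) (h₂ : u < t), φ.map h₂ ∘ₗ ψ.map h₁ = W.map (h₁.trans h₂).le)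

/-- Two persistence modules are observably isomorphic (isomorphic in the
observable category) if there are mutually inverse ob-morphisms between them. -/
def ObIsomorphic (V : PersMod.{u, v, w₁} k R) (W : PersMod.{u, v, w₂} k R) : Prop :=
  ∃ (φ : ObHom V W) (ψ : ObHom W V), ObInverse φ ψ


lemma IM.eq_zero {I : Set R} {t : R} (h : t ∉ I) (x : (intervalModule k R I).space t) :
    x = 0 :=
  Subtype.ext (x.2 h)

lemma IM.ne_zero_val {I : Set R} {t : R} (x : (intervalModule k R I).space t) (hx : x ≠ 0) :
    x.1 ≠ 0 := fun h => hx (Subtype.ext h)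

lemma IM.map_val {I : Set R} (hI : IsInterval I) {s t : R} (hs : s ∈ I) (ht : t ∈ I)
    (hle : s ≤ t) (x : (intervalModule k R I).space s) :
    ((intervalModule k R I).map hle x).1 = x.1 := by
  have hIcc : Set.Icc s t ⊆ I := fun u hu => hI.2 hs ht hu.1 hu.2
  simp [intervalModule, hIcc]
  rfl

/-- In the (at most one-dimensional) fibre, a nonzero element spans. -/
lemma IM.span {I : Set R} {t : R} (x y : (intervalModule k R I).space t) (hx : x ≠ 0) :
    ∃ c : k, y = c • x := by
  refine ⟨y.1 * x.1⁻¹, Subtype.ext ?_⟩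
  have hxv : x.1 ≠ 0 := IM.ne_zero_val x hx
  show y.1 = (y.1 * x.1⁻¹) * x.1
  field_simp

/-- interval modules are indecomposable: if `k_I = A ⊕ B` for
submodules `A`, `B` (pointwise direct sum, i.e. `A t` and `B t` are complementary
subspaces at each index, each closed under the structure maps), then `A = 0` or
`B = 0`. -/
theorem interval_module_indecomposable (I : Set R) (hI : IsInterval I)
    (A B : ∀ t : R, Submodule k ((intervalModule k R I).space t))
    (hA : ∀ (s t : R) (h : s ≤ t), ∀ x ∈ A s, (intervalModule k R I).map h x ∈ A t)
    (hB : ∀ (s t : R) (h : s ≤ t), ∀ x ∈ B s, (intervalModule k R I).map h x ∈ B t)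
    (hcompl : ∀ t : R, IsCompl (A t) (B t)) :
    (∀ t : R, A t = ⊥) ∨ (∀ t : R, B t = ⊥) := by
  classical
  -- If one side contains a nonzero vector, the other side vanishes there.
  have key : ∀ (t : R) (x : (intervalModule k R I).space t), x ∈ A t → x ≠ 0 →
      B t = ⊥ := by
    intro t x hxA hx
    rw [Submodule.eq_bot_iff]
    intro y hyB
    obtain ⟨c, hc⟩ := IM.span x y hx
    have hyA : y ∈ A t := hc ▸ Submodule.smul_mem _ c hxA
    exact ((hcompl t).disjoint.le_bot ⟨hyA, hyB⟩ : y ∈ (⊥ : Submodule k _))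
  have keyB : ∀ (t : R) (y : (intervalModule k R I).space t), y ∈ B t → y ≠ 0 →
      A t = ⊥ := by
    intro t y hyB hy
    rw [Submodule.eq_bot_iff]
    intro x hxA
    obtain ⟨c, hc⟩ := IM.span y x hy
    have hxB : x ∈ B t := hc ▸ Submodule.smul_mem _ c hyB
    exact ((hcompl t).disjoint.le_bot ⟨hxA, hxB⟩ : x ∈ (⊥ : Submodule k _))
  by_cases hA0 : ∀ t : R, A t = ⊥
  · exact Or.inl hA0
  · right
    push_neg at hA0
    obtain ⟨t₀, ht₀⟩ := hA0
    obtain ⟨x₀, hx₀A, hx₀⟩ := Submodule.exists_mem_ne_zero_of_ne_bot ht₀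
    have ht₀I : t₀ ∈ I := by
      by_contra h
      exact hx₀ (IM.eq_zero h x₀)
    intro t
    by_cases htI : t ∈ I
    · by_cases hle : t₀ ≤ t
      · -- push x₀ forward
        have hm : (intervalModule k R I).map hle x₀ ∈ A t := hA t₀ t hle x₀ hx₀A
        have hne : (intervalModule k R I).map hle x₀ ≠ 0 := by
          intro h
          apply IM.ne_zero_val x₀ hx₀
          rw [← IM.map_val hI ht₀I htI hle x₀, h]
          rfl
        exact key t _ hm hne
      · have hle : t ≤ t₀ := le_of_not_ge hle
        by_contra hBt
        obtain ⟨y, hyB, hy⟩ := Submodule.exists_mem_ne_zero_of_ne_bot hBt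
        have hm : (intervalModule k R I).map hle y ∈ B t₀ := hB t t₀ hle y hyB
        have hne : (intervalModule k R I).map hle y ≠ 0 := by
          intro h
          apply IM.ne_zero_val y hy
          rw [← IM.map_val hI htI ht₀I hle y, h]
          rfl
        exact hx₀ ((Submodule.eq_bot_iff _).mp (keyB t₀ _ hm hne) x₀ hx₀A)
    · rw [Submodule.eq_bot_iff]
      intro y _
      exact IM.eq_zero htI y
end

section
/- Let R be a dense linearly ordered set and let 0 → V' → V → V'' → 0 be a short exact sequence of persistence modules over R (exactness computed pointwise). Then V is ephemeral if and only if both V' and V'' are ephemeral. -/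
/-! Persistence modules over a linearly ordered indexing set. -/

universe u v w w₁ w₂ w₃

variable {k : Type u} [Field k] {R : Type v} [LinearOrder R]

/-- for a pointwise short exact sequence `0 → V' → V → V'' → 0` of
persistence modules over a dense linear order, `V` is ephemeral iff both `V'` and
`V''` are ephemeral. -/
theorem ephemeral_iff_of_shortExact [DenselyOrdered R]
    (V' : PersMod.{u, v, w₁} k R) (V : PersMod.{u, v, w₂} k R)
    (V'' : PersMod.{u, v, w₃} k R)
    (ι : PersHom V' V) (pr : PersHom V V'')
    (hinj : ∀ t : R, Function.Injective (ι.app t))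
    (hsurj : ∀ t : R, Function.Surjective (pr.app t))
    (hexact : ∀ t : R, LinearMap.range (ι.app t) = LinearMap.ker (pr.app t)) :
    Ephemeral V ↔ (Ephemeral V' ∧ Ephemeral V'') := by
  constructor
  · intro hV
    constructor
    · intro s t h
      apply LinearMap.ext; intro x
      apply hinj t
      have hn := LinearMap.congr_fun (ι.natural h.le) x
      simp only [LinearMap.coe_comp, Function.comp_apply] at hn
      rw [hn, hV h]; simp
    · intro s t h
      apply LinearMap.ext; intro x
      obtain ⟨y, rfl⟩ := hsurj s x
      have hn := LinearMap.congr_fun (pr.natural h.le) y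
      simp only [LinearMap.coe_comp, Function.comp_apply] at hn
      rw [← hn, hV h]; simp
  · rintro ⟨hV', hV''⟩ s t h
    obtain ⟨u, hsu, hut⟩ := exists_between h
    apply LinearMap.ext; intro x
    have h1 : pr.app u (V.map hsu.le x) = 0 := by
      have hn := LinearMap.congr_fun (pr.natural hsu.le) x
      simp only [LinearMap.coe_comp, Function.comp_apply] at hn
      simp [hn, hV'' hsu]
    have h2 : V.map hsu.le x ∈ LinearMap.range (ι.app u) := by
      rw [hexact u]; exact h1
    obtain ⟨y, hy⟩ := h2
    have hn := LinearMap.congr_fun (ι.natural hut.le) y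
    simp only [LinearMap.coe_comp, Function.comp_apply] at hn
    have : V.map hut.le (V.map hsu.le x) = 0 := by
      rw [← hy, ← hn, hV' hut]; simp
    rw [V.map_map hsu.le hut.le] at this
    simpa using this
end

section
/- Let R be a dense linearly ordered set and let φ : V → V' and ψ : V' → V'' be morphisms of persistence modules over R that are both weak isomorphisms. Then the composite ψ ∘ φ : V → V'' is a weak isomorphism. -/
/-! Persistence modules over a linearly ordered indexing set. -/

universe u v w w₁ w₂ w₃

variable {k : Type u} [Field k] {R : Type v} [LinearOrder R]

/-- over a dense linear order, the composite of two weak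
isomorphisms of persistence modules is a weak isomorphism. -/
theorem weakIso_comp [DenselyOrdered R]
    (V : PersMod.{u, v, w₁} k R) (V' : PersMod.{u, v, w₂} k R)
    (V'' : PersMod.{u, v, w₃} k R)
    (φ : PersHom V V') (ψ : PersHom V' V'')
    (hφ : IsWeakIso φ) (hψ : IsWeakIso ψ) :
    IsWeakIso (ψ.comp φ) := by
  constructor
  · intro s t h x hx
    obtain ⟨u, hsu, hut⟩ := exists_between h
    have h1 : V'.map hsu.le (φ.app s x) = 0 := hψ.1 hsu (φ.app s x) hx
    have h2 : φ.app u (V.map hsu.le x) = 0 := by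
      have := LinearMap.congr_fun (φ.natural hsu.le) x
      simp only [LinearMap.coe_comp, Function.comp_apply] at this
      rw [this, h1]
    have h3 : V.map hut.le (V.map hsu.le x) = 0 := hφ.1 hut _ h2
    rw [V.map_map] at h3
    rwa [show (hsu.le.trans hut.le) = h.le from rfl] at h3
  · intro s t h y
    obtain ⟨u, hsu, hut⟩ := exists_between h
    obtain ⟨z, hz⟩ := hψ.2 hsu y
    obtain ⟨x, hx⟩ := hφ.2 hut z
    refine ⟨x, ?_⟩
    show ψ.app t (φ.app t x) = _
    rw [hx]
    have := LinearMap.congr_fun (ψ.natural hut.le) z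
    simp only [LinearMap.coe_comp, Function.comp_apply] at this
    rw [this, hz, V''.map_map]
end

section
/- Let R be a dense linearly ordered set and let φ : V → W be a weak isomorphism of persistence modules over R. Then the induced ob-morphism φ° = (φ_t ∘ ρ_{ts})_{s<t} : V ⇢ W is an ob-isomorphism: there exists an ob-morphism ψ : W ⇢ V with ψ ∘ φ° = 1°_V and φ° ∘ ψ = 1°_W. -/
/-! Persistence modules over a linearly ordered indexing set. -/

universe u v w w₁ w₂ w₃

variable {k : Type u} [Field k] {R : Type v} [LinearOrder R]

/-- over a dense linear order, the ob-morphism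
`φ° = (φ_t ∘ ρ_{ts})_{s<t}` induced by a weak isomorphism `φ : V → W` is
invertible in the observable category. -/
theorem weakIso_ob_invertible [DenselyOrdered R]
    (V : PersMod.{u, v, w₁} k R) (W : PersMod.{u, v, w₂} k R)
    (φ : PersHom V W) (hφ : IsWeakIso φ) :
    ∃ ψ : ObHom W V, ObInverse φ.ob ψ := by
  classical
  obtain ⟨hker, hsur⟩ := hφ
  have natp : ∀ {s t : R} (h : s ≤ t) (x : V.space s),
      φ.app t (V.map h x) = W.map h (φ.app s x) := fun h x =>
    LinearMap.congr_fun (φ.natural h) x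
  have hinj : ∀ {u t : R} (h : u < t) (a b : V.space u),
      φ.app u a = φ.app u b → V.map h.le a = V.map h.le b := by
    intro u t h a b hab
    have h0 : φ.app u (a - b) = 0 := by rw [map_sub, hab, sub_self]
    have h1 := hker h (a - b) h0
    rw [map_sub] at h1
    exact sub_eq_zero.mp h1
  -- midpoint choice
  let mid : ∀ {s t : R}, s < t → R := fun h => (exists_between h).choose
  have mid1 : ∀ {s t : R} (h : s < t), s < mid h := fun h => (exists_between h).choose_spec.1
  have mid2 : ∀ {s t : R} (h : s < t), mid h < t := fun h => (exists_between h).choose_spec.2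
  -- lift choice
  let lift : ∀ {s u : R}, s < u → W.space s → V.space u :=
    fun h y => (LinearMap.mem_range.mp (hsur h y)).choose
  have liftp : ∀ {s u : R} (h : s < u) (y : W.space s),
      φ.app u (lift h y) = W.map h.le y :=
    fun h y => (LinearMap.mem_range.mp (hsur h y)).choose_spec
  -- uniqueness of the pushed-forward lift
  have huniq : ∀ {s t : R} (y : W.space s) {u u' : R} (hu1 : s < u) (hu2 : u < t)
      (hu1' : s < u') (hu2' : u' < t) (x : V.space u) (x' : V.space u'),
      φ.app u x = W.map hu1.le y → φ.app u' x' = W.map hu1'.le y →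
      V.map hu2.le x = V.map hu2'.le x' := by
    intro s t y u u' hu1 hu2 hu1' hu2' x x' hx hx'
    obtain ⟨vv, hv1, hv2⟩ := exists_between (max_lt hu2 hu2')
    have huv : u ≤ vv := ((le_max_left u u').trans hv1.le)
    have huv' : u' ≤ vv := ((le_max_right u u').trans hv1.le)
    have e1 : φ.app vv (V.map huv x) = W.map (hu1.le.trans huv) y := by
      rw [natp huv x, hx, W.map_map]
    have e2 : φ.app vv (V.map huv' x') = W.map (hu1'.le.trans huv') y := by
      rw [natp huv' x', hx', W.map_map]
    have := hinj hv2 _ _ (e1.trans e2.symm)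
    rw [V.map_map, V.map_map] at this
    exact this
  refine ⟨{
    map := fun {s t} h =>
      { toFun := fun y => V.map (mid2 h).le (lift (mid1 h) y)
        map_add' := by
          intro y y'
          rw [← map_add]
          refine hinj (mid2 h) _ _ ?_
          rw [map_add, liftp (mid1 h), liftp (mid1 h), liftp (mid1 h), map_add]
        map_smul' := by
          intro c y
          rw [RingHom.id_apply, ← map_smul]
          refine hinj (mid2 h) _ _ ?_
          rw [map_smul, liftp (mid1 h), liftp (mid1 h), map_smul] }
    compat := by
      intro s u' v' t h₁ h₂ h₃
      apply LinearMap.ext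
      intro y
      simp only [LinearMap.coe_comp, Function.comp_apply, LinearMap.coe_mk, AddHom.coe_mk]
      have H : s < t := lt_of_le_of_lt h₁ (lt_of_lt_of_le h₂ h₃)
      have hsm : s < mid h₂ := lt_of_le_of_lt h₁ (mid1 h₂)
      have hmt : mid h₂ < t := lt_of_lt_of_le (mid2 h₂) h₃
      have key : V.map (mid2 H).le (lift (mid1 H) y)
          = V.map hmt.le (lift (mid1 h₂) (W.map h₁ y)) := by
        refine huniq y (mid1 H) (mid2 H) hsm hmt _ _ (liftp (mid1 H) y) ?_
        rw [liftp (mid1 h₂), W.map_map]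
      rw [key, ← V.map_map (mid2 h₂).le h₃] }, ?_, ?_⟩
  · intro s u' t h₁ h₂
    apply LinearMap.ext
    intro x
    simp only [LinearMap.coe_comp, Function.comp_apply, PersHom.ob, LinearMap.coe_mk,
      AddHom.coe_mk]
    have e : φ.app (mid h₂) (lift (mid1 h₂) (φ.app u' (V.map h₁.le x)))
        = φ.app (mid h₂) (V.map (h₁.le.trans (mid1 h₂).le) x) := by
      rw [liftp (mid1 h₂), ← V.map_map h₁.le (mid1 h₂).le, natp (mid1 h₂).le]
    have := hinj (mid2 h₂) _ _ e
    rw [V.map_map] at this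
    exact this
  · intro s u' t h₁ h₂
    apply LinearMap.ext
    intro y
    simp only [LinearMap.coe_comp, Function.comp_apply, PersHom.ob, LinearMap.coe_mk,
      AddHom.coe_mk]
    rw [V.map_map (mid2 h₁).le h₂.le, natp, liftp (mid1 h₁), W.map_map]
end

section
/- Let R be a dense linearly ordered set and V a persistence module over R. For each t ∈ R let V̄_t be the colimit of the directed system (V_s, ρ_{us})_{s ≤ u < t} over the indices s < t, with structure maps ρ̄_{ts} : V̄_s → V̄_t induced by the universal property, and let n^V : V̄ → V be the morphism of persistence modules whose component n^V_t : V̄_t → V_t is induced by the maps ρ_{ts} : V_s → V_t for s < t. Then n^V is a weak isomorphism: its kernel and cokernel are ephemeral. -/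
/-! Persistence modules over a linearly ordered indexing set. -/

universe u v w w₁ w₂ w₃

variable {k : Type u} [Field k] {R : Type v} [LinearOrder R]

/-! The left Kan extension `V̄` of a persistence module: `V̄_t = colim_{s<t} V_s`,
together with the canonical morphism `n^V : V̄ → V`. -/

open Module

noncomputable local instance (t : R) : DecidableEq {s : R // s < t} := Classical.decEq _

/-- The directed system, indexed by `{s // s < t}`, whose colimit is `V̄_t`. -/
@[reducible] def indexSys (V : PersMod.{u, v, w} k R) (t : R) :
    ∀ i j : {s : R // s < t}, i ≤ j → (V.space i.1 →ₗ[k] V.space j.1) :=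
  fun _ _ hij => V.map hij

/-- `V̄_t`: the colimit (direct limit) of the directed system `(V_s)_{s<t}` along
the structure maps. (For the empty system this is the zero module.) -/
@[reducible] def barSpace (V : PersMod.{u, v, w} k R) (t : R) : Type max v w :=
  Module.DirectLimit (fun i : {s : R // s < t} => V.space i.1) (indexSys V t)

/-- The canonical inclusion `V_s → V̄_t` for `s < t`. -/
@[reducible] noncomputable def barOf (V : PersMod.{u, v, w} k R) {t : R}
    (i : {s : R // s < t}) : V.space i.1 →ₗ[k] barSpace V t :=
  Module.DirectLimit.of k {s : R // s < t} (fun i : {s : R // s < t} => V.space i.1)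
    (indexSys V t) i

/-- Extensionality for maps out of `V̄_t` (equality on the canonical generators). -/
lemma barSpace.hom_ext (V : PersMod.{u, v, w} k R) {t : R} {P : Type w₂}
    [AddCommGroup P] [Module k P] (F F' : barSpace V t →ₗ[k] P)
    (h : ∀ (i : {s : R // s < t}) (x : V.space i.1), F (barOf V i x) = F' (barOf V i x)) :
    F = F' := by
  refine LinearMap.ext fun z => ?_
  cases isEmpty_or_nonempty {s : R // s < t} with
  | inl hemp =>
    rw [Subsingleton.elim z 0]
    simp
  | inr hne =>
    exact Module.DirectLimit.induction_on z h

/-- The structure maps `ρ̄_{ts} : V̄_s → V̄_t`, induced by the universal property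
of the colimit. -/
@[reducible] noncomputable def barMap (V : PersMod.{u, v, w} k R) {s t : R} (h : s ≤ t) :
    barSpace V s →ₗ[k] barSpace V t :=
  Module.DirectLimit.lift k {r : R // r < s} (fun i : {r : R // r < s} => V.space i.1)
    (indexSys V s) (fun i => barOf V ⟨i.1, lt_of_lt_of_le i.2 h⟩)
    (fun i j hij x =>
      Module.DirectLimit.of_f (G := fun i : {r : R // r < t} => V.space i.1)
        (f := indexSys V t) (i := ⟨i.1, lt_of_lt_of_le i.2 h⟩)
        (j := ⟨j.1, lt_of_lt_of_le j.2 h⟩) (hij := hij) (x := x))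

lemma barMap_of (V : PersMod.{u, v, w} k R) {s t : R} (h : s ≤ t)
    (i : {r : R // r < s}) (x : V.space i.1) :
    barMap V h (barOf V i x) = barOf V ⟨i.1, lt_of_lt_of_le i.2 h⟩ x :=
  Module.DirectLimit.lift_of _ _ _

/-- The component at `t` of the canonical morphism `n^V`, induced on the colimit
by the maps `ρ_{ts} : V_s → V_t`, `s < t`. -/
@[reducible] noncomputable def nVapp (V : PersMod.{u, v, w} k R) (t : R) :
    barSpace V t →ₗ[k] V.space t :=
  Module.DirectLimit.lift k {s : R // s < t} (fun i : {s : R // s < t} => V.space i.1)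
    (indexSys V t) (fun i => V.map i.2.le)
    (fun i j hij x => V.map_map hij j.2.le x)

lemma nVapp_of (V : PersMod.{u, v, w} k R) {t : R} (i : {s : R // s < t})
    (x : V.space i.1) : nVapp V t (barOf V i x) = V.map i.2.le x :=
  Module.DirectLimit.lift_of _ _ _

/-- The persistence module `V̄`, with `V̄_t = colim_{s<t} V_s`. -/
noncomputable def barPers (V : PersMod.{u, v, w} k R) : PersMod.{u, v, max v w} k R where
  space t := barSpace V t
  map h := barMap V h
  map_refl t := by
    apply barSpace.hom_ext
    intro i x
    rw [LinearMap.id_coe, id_eq, barMap_of]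
  map_comp {s u t} h₁ h₂ := by
    apply barSpace.hom_ext
    intro i x
    simp only [LinearMap.coe_comp, Function.comp_apply]
    rw [barMap_of, barMap_of, barMap_of]

/-- The canonical morphism `n^V : V̄ → V`. -/
noncomputable def nV (V : PersMod.{u, v, w} k R) : PersHom (barPers V) V where
  app t := nVapp V t
  natural {s t} h := by
    apply barSpace.hom_ext
    intro i x
    try simp only [LinearMap.coe_comp, Function.comp_apply]
    show nVapp V t (barMap V h (barOf V i x)) = V.map h (nVapp V s (barOf V i x))
    rw [barMap_of, nVapp_of, nVapp_of, V.map_map]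

/-- over a dense linear order, the canonical morphism `n^V : V̄ → V`
from the colimit module `V̄_t = colim_{s<t} V_s` to `V` is a weak isomorphism: its
kernel and cokernel (computed pointwise) are ephemeral. -/
theorem nV_weakIso [DenselyOrdered R] (V : PersMod.{u, v, w} k R) :
    IsWeakIso (nV V) := by
  constructor
  · intro s t h x hx
    show barMap V h.le x = 0
    cases isEmpty_or_nonempty {r : R // r < s} with
    | inl hemp =>
      rw [Subsingleton.elim (α := barSpace V s) x 0, map_zero]
    | inr hne =>
      obtain ⟨i, z, rfl⟩ := Module.DirectLimit.exists_of x
      have hz : V.map i.2.le z = 0 := by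
        have := nVapp_of V i z
        rw [show nVapp V s (barOf V i z) = 0 from hx] at this
        exact this.symm
      obtain ⟨u', hu1, hu2⟩ := exists_between h
      rw [barMap_of]
      have key : barOf V (⟨i.1, lt_of_lt_of_le i.2 h.le⟩ : {r : R // r < t}) z
          = barOf V (⟨u', hu2⟩ : {r : R // r < t}) (V.map (i.2.le.trans hu1.le) z) := by
        exact (Module.DirectLimit.of_f (G := fun i : {r : R // r < t} => V.space i.1)
          (f := indexSys V t) (i := ⟨i.1, lt_of_lt_of_le i.2 h.le⟩)
          (j := ⟨u', hu2⟩) (hij := i.2.le.trans hu1.le) (x := z)).symm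
      rw [key]
      have : V.map (i.2.le.trans hu1.le) z = 0 := by
        rw [← V.map_map i.2.le hu1.le, hz, map_zero]
      rw [this, map_zero]
  · intro s t h y
    exact ⟨barOf V ⟨s, h⟩ y, nVapp_of V ⟨s, h⟩ y⟩
end

section
/- Let R be a dense linearly ordered set and I an interval in R containing at least two elements. Then every ob-endomorphism φ : k_I ⇢ k_I of the interval module k_I is a scalar multiple of the ob-identity 1°_{k_I}; in particular the ring of ob-endomorphisms of k_I is isomorphic to k. -/
/-! Persistence modules over a linearly ordered indexing set. -/

universe u v w w₁ w₂ w₃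

variable {k : Type u} [Field k] {R : Type v} [LinearOrder R]

/-- The canonical generator `1` of the fibre of the interval module at a point of `I`. -/
noncomputable def ione {I : Set R} {s : R} (hs : s ∈ I) :
    (intervalModule k R I).space s := ⟨1, fun h => (h hs).elim⟩

/-- Explicit coercion from a fibre of the interval module to `k`. -/
def icoe {I : Set R} {t : R} (x : (intervalModule k R I).space t) : k := Subtype.val x

lemma icoe_ext {I : Set R} {t : R} {x y : (intervalModule k R I).space t}
    (h : icoe x = icoe y) : x = y := Subtype.ext h

@[simp] lemma icoe_ione {I : Set R} {s : R} (hs : s ∈ I) :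
    icoe (ione (k := k) hs) = 1 := rfl

@[simp] lemma icoe_zero {I : Set R} {t : R} :
    icoe (0 : (intervalModule k R I).space t) = 0 := rfl

@[simp] lemma icoe_smul {I : Set R} {t : R} (c : k)
    (x : (intervalModule k R I).space t) : icoe (c • x) = c * icoe x := rfl

lemma icoe_eq_zero_of_notMem {I : Set R} {t : R} (ht : t ∉ I)
    (x : (intervalModule k R I).space t) : icoe x = 0 := x.2 ht

open Classical in
lemma icoe_map {I : Set R} {s t : R} (h : s ≤ t)
    (x : (intervalModule k R I).space s) :
    icoe ((intervalModule k R I).map h x)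
      = if Set.Icc s t ⊆ I then icoe x else 0 := rfl

/-- over a dense linear order, every ob-endomorphism of the interval
module `k_I` of a non-singleton interval `I` is a scalar multiple of the
ob-identity `1°_{k_I} = (ρ_{ts})_{s<t}`. -/
theorem interval_module_ob_endomorphism_scalar [DenselyOrdered R]
    (I : Set R) (hI : IsInterval I) (a b : R) (ha : a ∈ I) (hb : b ∈ I) (hab : a ≠ b)
    (φ : ObHom (intervalModule k R I) (intervalModule k R I)) :
    ∃ c : k, ∀ ⦃s t : R⦄ (h : s < t),
      φ.map h = c • (intervalModule k R I).map h.le := by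
  classical
  have hsub : ∀ {s t : R}, s ∈ I → t ∈ I → Set.Icc s t ⊆ I :=
    fun hs ht w hw => hI.2 hs ht hw.1 hw.2
  obtain ⟨a0, b0, ha0, hb0, h0⟩ : ∃ a0 b0 : R, a0 ∈ I ∧ b0 ∈ I ∧ a0 < b0 := by
    rcases hab.lt_or_gt with h | h
    exacts [⟨a, b, ha, hb, h⟩, ⟨b, a, hb, ha, h⟩]
  -- the scalar of `φ` on a subinterval equals the scalar on any larger subinterval
  have key : ∀ {S s t T : R} (hS : S ∈ I) (hs : s ∈ I) (hT : T ∈ I)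
      (h1 : S ≤ s) (h2 : s < t) (h3 : t ≤ T),
      icoe (φ.map h2 (ione hs)) = icoe (φ.map (h1.trans_lt (h2.trans_le h3)) (ione hS)) := by
    intro S s t T hS hs hT h1 h2 h3
    have ht : t ∈ I := hI.2 hS hT (h1.trans h2.le) h3
    have hc := LinearMap.congr_fun (φ.compat h1 h2 h3) (ione hS)
    simp only [LinearMap.coe_comp, Function.comp_apply] at hc
    have e1 : (intervalModule k R I).map h1 (ione hS) = ione hs := by
      apply icoe_ext
      rw [icoe_map, if_pos (hsub hS hs), icoe_ione, icoe_ione]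
    rw [e1] at hc
    rw [hc, icoe_map, if_pos (hsub ht hT)]
  -- the scalar is the same on all subintervals
  have claim : ∀ {s t : R} (h : s < t) (hs : s ∈ I), t ∈ I →
      icoe (φ.map h (ione hs)) = icoe (φ.map h0 (ione ha0)) := by
    intro s t h hs ht
    have hS : min s a0 ∈ I := by
      rcases min_cases s a0 with ⟨e, _⟩ | ⟨e, _⟩ <;> rw [e] <;> assumption
    have hT : max t b0 ∈ I := by
      rcases max_cases t b0 with ⟨e, _⟩ | ⟨e, _⟩ <;> rw [e] <;> assumption
    have e1 := key hS hs hT (min_le_left s a0) h (le_max_left t b0)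
    have e2 := key hS ha0 hT (min_le_right s a0) h0 (le_max_right t b0)
    rw [e1, e2]
  -- linearity: a map is determined by its value on the generator
  have lin : ∀ {s t : R} (hs : s ∈ I)
      (f : (intervalModule k R I).space s →ₗ[k] (intervalModule k R I).space t)
      (x : (intervalModule k R I).space s),
      icoe (f x) = icoe x * icoe (f (ione hs)) := by
    intro s t hs f x
    have hx : x = icoe x • ione hs := by
      apply icoe_ext
      simp
    conv_lhs => rw [hx]
    rw [map_smul, icoe_smul]
  refine ⟨icoe (φ.map h0 (ione ha0)), ?_⟩
  intro s t h
  by_cases hIcc : Set.Icc s t ⊆ I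
  · have hs : s ∈ I := hIcc ⟨le_refl s, h.le⟩
    have ht : t ∈ I := hIcc ⟨h.le, le_refl t⟩
    apply LinearMap.ext
    intro x
    rw [LinearMap.smul_apply]
    apply icoe_ext
    rw [icoe_smul, lin hs (φ.map h) x, lin hs ((intervalModule k R I).map h.le) x,
      claim h hs ht, icoe_map, if_pos hIcc, icoe_ione]
    ring
  · apply LinearMap.ext
    intro x
    rw [LinearMap.smul_apply]
    have rhs0 : icoe (φ.map h0 (ione ha0)) • (intervalModule k R I).map h.le x = 0 := by
      apply icoe_ext
      rw [icoe_smul, icoe_map, if_neg hIcc, mul_zero, icoe_zero]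
    rw [rhs0]
    by_cases hs : s ∈ I
    · by_cases ht : t ∈ I
      · -- a point of `Icc s t` outside `I` lies strictly between `s` and `t`
        obtain ⟨w, hw, hwI⟩ := Set.not_subset.mp hIcc
        have hsw : s < w := hw.1.lt_of_ne (by rintro rfl; exact hwI hs)
        have hwt : w < t := hw.2.lt_of_ne (by rintro rfl; exact hwI ht)
        obtain ⟨v, hwv, hvt⟩ := exists_between hwt
        have hc := LinearMap.congr_fun (φ.compat hw.1 hwv hvt.le) x
        simp only [LinearMap.coe_comp, Function.comp_apply] at hc
        have e0 : (intervalModule k R I).map hw.1 x = 0 := by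
          apply icoe_ext
          rw [icoe_map, if_neg (fun hsub => hwI (hsub ⟨hw.1, le_refl w⟩)), icoe_zero]
        rw [e0, map_zero, map_zero] at hc
        exact hc
      · apply icoe_ext
        rw [icoe_zero]
        exact icoe_eq_zero_of_notMem ht _
    · have hx0 : x = 0 := icoe_ext ((icoe_eq_zero_of_notMem hs x).trans icoe_zero.symm)
      rw [hx0, map_zero]
end

section
/- Let R be a dense linearly ordered set and let V and W be persistence modules over R that are ob-isomorphic. If V is q-tame, then W is q-tame. -/
/-! Persistence modules over a linearly ordered indexing set. -/

universe u v w w₁ w₂ w₃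

variable {k : Type u} [Field k] {R : Type v} [LinearOrder R]

/-! Pointwise direct sums of persistence modules. -/

open DirectSum

/-- The direct sum of a family of persistence modules, computed pointwise. -/
noncomputable def directSumPers {J : Type w₂} (M : J → PersMod.{u, v, w₁} k R) :
    PersMod.{u, v, max w₁ w₂} k R where
  space t := ⨁ j, (M j).space t
  map {s t} h := DFinsupp.mapRange.linearMap (fun j => (M j).map h)
  map_refl t := by
    try dsimp only
    have : (fun j => (M j).map (le_refl t)) = fun j => LinearMap.id :=
      funext fun j => (M j).map_refl t
    rw [this, DFinsupp.mapRange.linearMap_id]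
  map_comp {s u t} h₁ h₂ := by
    try dsimp only
    rw [← DFinsupp.mapRange.linearMap_comp]
    have : (fun j => (M j).map h₂ ∘ₗ (M j).map h₁) = fun j => (M j).map (h₁.trans h₂) :=
      funext fun j => (M j).map_comp h₁ h₂
    rw [this]
/-! q-tame persistence modules. -/

/-- A persistence module is q-tame if every structure map `ρ_{ts}` with `s < t`
has finite rank. -/
def QTame (V : PersMod.{u, v, w₁} k R) : Prop :=
  ∀ ⦃s t : R⦄ (h : s < t), LinearMap.rank (V.map h.le) < Cardinal.aleph0

/-- over a dense linear order, q-tameness is an observable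
property: if `V` and `W` are ob-isomorphic and `V` is q-tame, then so is `W`. -/
theorem qTame_of_obIsomorphic [DenselyOrdered R]
    (V : PersMod.{u, v, w₁} k R) (W : PersMod.{u, v, w₂} k R)
    (h : ObIsomorphic V W) (hV : QTame V) : QTame W := by
  obtain ⟨φ, ψ, hinv⟩ := h
  intro s t hst
  obtain ⟨u, hsu, hut⟩ := exists_between hst
  obtain ⟨v, huv, hvt⟩ := exists_between hut
  -- W.map (s ≤ t) = φ.map (v<t) ∘ ψ.map (s<v)
  have h1 : W.map hst.le = φ.map hvt ∘ₗ ψ.map (hsu.trans huv) := by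
    rw [hinv.2 (hsu.trans huv) hvt]
  -- ψ.map (s<v) = V.map (u ≤ v) ∘ ψ.map (s<u) ∘ W.map (refl)
  have h2 : ψ.map (hsu.trans huv) = V.map huv.le ∘ₗ ψ.map hsu ∘ₗ W.map (le_refl s) := by
    have := ψ.compat (le_refl s) hsu huv.le
    convert this using 2
  have h3 : W.map hst.le =
      (φ.map hvt ∘ₗ V.map huv.le) ∘ₗ (ψ.map hsu ∘ₗ W.map (le_refl s)) := by
    rw [h1, h2]; ext x; simp
  rw [h3]
  calc LinearMap.rank ((φ.map hvt ∘ₗ V.map huv.le) ∘ₗ (ψ.map hsu ∘ₗ W.map (le_refl s)))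
      ≤ LinearMap.rank (φ.map hvt ∘ₗ V.map huv.le) :=
        LinearMap.rank_comp_le_left _ _
    _ < Cardinal.aleph0 := by
        have := LinearMap.lift_rank_comp_le_right (V.map huv.le) (φ.map hvt)
        have hfin := hV huv
        rw [← Cardinal.lift_lt_aleph0.{w₂, w₁}]
        exact lt_of_le_of_lt this (Cardinal.lift_lt_aleph0.mpr hfin)
end

section
/- Let V, V' and W be persistence modules over the real line ℝ. If V and V' are ob-isomorphic, then d_i(V, W) = d_i(V', W), where d_i denotes the interleaving distance. In particular, the interleaving distance is invariant under ob-isomorphism. -/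
/-! Persistence modules over a linearly ordered indexing set. -/

universe u v w w₁ w₂ w₃

variable {k : Type u} [Field k] {R : Type v} [LinearOrder R]

open scoped ENNReal NNReal

/-! Interleavings and the interleaving distance, for persistence modules over ℝ. -/

/-- An `ε`-interleaving (with `ε ≥ 0`) between persistence modules `V, W` over the
real line: families of linear maps `F_{ts} : V_s → W_t` and `G_{ts} : W_s → V_t`
defined for `t ≥ s + ε`, compatible with the structure maps, whose composites
recover the structure maps of `V` and `W`. -/
structure Interleaving (V : PersMod.{u, 0, w₁} k ℝ) (W : PersMod.{u, 0, w₂} k ℝ)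
    (ε : ℝ) where
  nonneg : 0 ≤ ε
  F : ∀ {s t : ℝ}, s + ε ≤ t → (V.space s →ₗ[k] W.space t)
  G : ∀ {s t : ℝ}, s + ε ≤ t → (W.space s →ₗ[k] V.space t)
  F_compat : ∀ {s u v t : ℝ} (h₁ : s ≤ u) (h₂ : u + ε ≤ v) (h₃ : v ≤ t),
      F (show s + ε ≤ t by linarith) = W.map h₃ ∘ₗ F h₂ ∘ₗ V.map h₁
  G_compat : ∀ {s u v t : ℝ} (h₁ : s ≤ u) (h₂ : u + ε ≤ v) (h₃ : v ≤ t),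
      G (show s + ε ≤ t by linarith) = V.map h₃ ∘ₗ G h₂ ∘ₗ W.map h₁
  GF : ∀ {s u t : ℝ} (h₁ : s + ε ≤ u) (h₂ : u + ε ≤ t),
      G h₂ ∘ₗ F h₁ = V.map (show s ≤ t by nlinarith)
  FG : ∀ {s u t : ℝ} (h₁ : s + ε ≤ u) (h₂ : u + ε ≤ t),
      F h₂ ∘ₗ G h₁ = W.map (show s ≤ t by nlinarith)

/-- The interleaving distance between persistence modules over ℝ: the infimum in
`[0, ∞]` of the set of `ε ≥ 0` for which an `ε`-interleaving exists (`∞` if there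
is none). -/
noncomputable def interleavingDist (V : PersMod.{u, 0, w₁} k ℝ)
    (W : PersMod.{u, 0, w₂} k ℝ) : ℝ≥0∞ :=
  sInf {x : ℝ≥0∞ | ∃ ε : ℝ, Nonempty (Interleaving V W ε) ∧ x = ENNReal.ofReal ε}

/-! Auxiliary lemmas for the proof. -/

section Aux

lemma ObHom.map_eq {V : PersMod.{u, v, w₁} k R} {W : PersMod.{u, v, w₂} k R}
    (φ : ObHom V W) {s u' v t : R} (h₁ : s ≤ u') (h₂ : u' < v) (h₃ : v ≤ t)
    (x : V.space s) :
    φ.map (lt_of_le_of_lt h₁ (lt_of_lt_of_le h₂ h₃)) x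
      = W.map h₃ (φ.map h₂ (V.map h₁ x)) := by
  have := LinearMap.congr_fun (φ.compat h₁ h₂ h₃) x
  simpa using this

/-- Given an ob-isomorphism `V ≅ V'` and an `ε`-interleaving of `V` and `W`,
construct an `(ε+δ)`-interleaving of `V'` and `W` for any `δ > 0`. -/
noncomputable def Interleaving.shift {V : PersMod.{u, 0, w₁} k ℝ}
    {V' : PersMod.{u, 0, w₂} k ℝ} {W : PersMod.{u, 0, w₃} k ℝ}
    (α : ObHom V V') (β : ObHom V' V) (hinv : ObInverse α β)
    {ε δ : ℝ} (hδ : 0 < δ) (I : Interleaving V W ε) :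
    Interleaving V' W (ε + δ) where
  nonneg := by linarith [I.nonneg]
  F {s t} h := I.F (show (s + δ/2) + ε ≤ t by linarith)
      ∘ₗ β.map (show s < s + δ/2 by linarith)
  G {s t} h := α.map (show t - δ/2 < t by linarith)
      ∘ₗ I.G (show s + ε ≤ t - δ/2 by linarith)
  F_compat {s u v t} h₁ h₂ h₃ := by
    apply LinearMap.ext; intro x
    simp only [LinearMap.coe_comp, Function.comp_apply]
    have e1 : β.map (show u < u + δ/2 by linarith) (V'.map h₁ x)
        = V.map (show s + δ/2 ≤ u + δ/2 by linarith)
            (β.map (show s < s + δ/2 by linarith) x) := by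
      have a1 := β.map_eq h₁ (show u < u + δ/2 by linarith) (le_refl (u + δ/2)) x
      have a2 := β.map_eq (le_refl s) (show s < s + δ/2 by linarith)
        (show s + δ/2 ≤ u + δ/2 by linarith) x
      simp only [V.map_refl, V'.map_refl, LinearMap.id_coe, id_eq] at a1 a2
      rw [← a1, ← a2]
    rw [e1]
    have e2 := LinearMap.congr_fun
      (I.F_compat (show s + δ/2 ≤ u + δ/2 by linarith)
        (show (u + δ/2) + ε ≤ v by linarith) h₃)
      (β.map (show s < s + δ/2 by linarith) x)
    simpa using e2
  G_compat {s u v t} h₁ h₂ h₃ := by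
    apply LinearMap.ext; intro x
    simp only [LinearMap.coe_comp, Function.comp_apply]
    have a1 : I.G (show u + ε ≤ v - δ/2 by linarith) (W.map h₁ x)
        = I.G (show s + ε ≤ v - δ/2 by linarith) x := by
      have := LinearMap.congr_fun
        (I.G_compat h₁ (show u + ε ≤ v - δ/2 by linarith) (le_refl (v - δ/2))) x
      simpa [V.map_refl] using this.symm
    set y := I.G (show s + ε ≤ v - δ/2 by linarith) x with hy
    have a2 : α.map (show v - δ/2 < t by linarith) y
        = V'.map h₃ (α.map (show v - δ/2 < v by linarith) y) := by
      have := α.map_eq (le_refl (v - δ/2)) (show v - δ/2 < v by linarith) h₃ y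
      simpa [V.map_refl] using this
    have a3 : I.G (show s + ε ≤ t - δ/2 by linarith) x
        = V.map (show v - δ/2 ≤ t - δ/2 by linarith) y := by
      have := LinearMap.congr_fun
        (I.G_compat (le_refl s) (show s + ε ≤ v - δ/2 by linarith)
          (show v - δ/2 ≤ t - δ/2 by linarith)) x
      simpa [hy, W.map_refl] using this
    have a4 : α.map (show v - δ/2 < t by linarith) y
        = α.map (show t - δ/2 < t by linarith)
            (V.map (show v - δ/2 ≤ t - δ/2 by linarith) y) := by
      have := α.map_eq (show v - δ/2 ≤ t - δ/2 by linarith)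
        (show t - δ/2 < t by linarith) (le_refl t) y
      simpa [V'.map_refl] using this
    rw [a1, ← a2, a3, ← a4]
  GF {s u t} h₁ h₂ := by
    have hε := I.nonneg
    apply LinearMap.ext; intro x
    simp only [LinearMap.coe_comp, Function.comp_apply]
    have e1 := LinearMap.congr_fun
      (I.GF (show (s + δ/2) + ε ≤ u by linarith)
        (show u + ε ≤ t - δ/2 by linarith))
      (β.map (show s < s + δ/2 by linarith) x)
    simp only [LinearMap.coe_comp, Function.comp_apply] at e1
    rw [e1]
    have e2 : α.map (show s + δ/2 < t by linarith)
          (β.map (show s < s + δ/2 by linarith) x)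
        = α.map (show t - δ/2 < t by linarith)
            (V.map (show s + δ/2 ≤ t - δ/2 by linarith)
              (β.map (show s < s + δ/2 by linarith) x)) := by
      have := α.map_eq (show s + δ/2 ≤ t - δ/2 by linarith)
        (show t - δ/2 < t by linarith) (le_refl t)
        (β.map (show s < s + δ/2 by linarith) x)
      simpa [V'.map_refl] using this
    rw [← e2]
    have e3 := LinearMap.congr_fun
      (hinv.2 (show s < s + δ/2 by linarith) (show s + δ/2 < t by linarith)) x
    simpa using e3
  FG {s u t} h₁ h₂ := by
    have hε := I.nonneg
    apply LinearMap.ext; intro x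
    simp only [LinearMap.coe_comp, Function.comp_apply]
    have e1 := LinearMap.congr_fun
      (hinv.1 (show u - δ/2 < u by linarith) (show u < u + δ/2 by linarith))
      (I.G (show s + ε ≤ u - δ/2 by linarith) x)
    simp only [LinearMap.coe_comp, Function.comp_apply] at e1
    rw [e1]
    have e2 := LinearMap.congr_fun
      (I.F_compat (show u - δ/2 ≤ u + δ/2 by linarith)
        (show (u + δ/2) + ε ≤ t by linarith) (le_refl t))
      (I.G (show s + ε ≤ u - δ/2 by linarith) x)
    simp only [LinearMap.coe_comp, Function.comp_apply, W.map_refl,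
      LinearMap.id_coe, id_eq] at e2
    rw [← e2]
    have e3 := LinearMap.congr_fun
      (I.FG (show s + ε ≤ u - δ/2 by linarith)
        (show (u - δ/2) + ε ≤ t by linarith)) x
    simpa using e3

lemma interleavingDist_le_of_obInverse {V : PersMod.{u, 0, w₁} k ℝ}
    {V' : PersMod.{u, 0, w₂} k ℝ} {W : PersMod.{u, 0, w₃} k ℝ}
    (α : ObHom V V') (β : ObHom V' V) (hinv : ObInverse α β) :
    interleavingDist V' W ≤ interleavingDist V W := by
  apply le_sInf
  rintro x ⟨ε, ⟨I⟩, rfl⟩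
  apply ENNReal.le_of_forall_pos_le_add
  intro δ hδ _
  have hδ' : (0:ℝ) < (δ : ℝ) := hδ
  have : Nonempty (Interleaving V' W (ε + δ)) := ⟨I.shift α β hinv hδ'⟩
  calc interleavingDist V' W ≤ ENNReal.ofReal (ε + δ) :=
        sInf_le ⟨ε + δ, this, rfl⟩
    _ = ENNReal.ofReal ε + δ := by
        rw [ENNReal.ofReal_add I.nonneg hδ'.le, ENNReal.ofReal_coe_nnreal]

end Aux

/-- the interleaving distance between persistence modules over the
real line is an observable invariant: if `V` and `V'` are ob-isomorphic then
`d_i(V, W) = d_i(V', W)` for every `W`. -/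
theorem interleavingDist_observable
    (V : PersMod.{u, 0, w₁} k ℝ) (V' : PersMod.{u, 0, w₂} k ℝ)
    (W : PersMod.{u, 0, w₃} k ℝ) (h : ObIsomorphic V V') :
    interleavingDist V W = interleavingDist V' W := by
  obtain ⟨φ, ψ, hinv⟩ := h
  exact le_antisymm (interleavingDist_le_of_obInverse ψ φ ⟨hinv.2, hinv.1⟩)
    (interleavingDist_le_of_obInverse φ ψ hinv)
end

section
/- Let V and W be q-tame persistence modules over the real line ℝ that are ob-isomorphic. Then their undecorated persistence diagrams coincide: mult_V(p, q) = mult_W(p, q) for all −∞ ≤ p < q ≤ +∞. -/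
/-! Persistence modules over a linearly ordered indexing set. -/

universe u v w w₁ w₂ w₃

variable {k : Type u} [Field k] {R : Type v} [LinearOrder R]

/-! Persistence measures and undecorated persistence diagrams over ℝ. -/

open Classical in
/-- The (finite) rank of the structure map of `V` from index `x` to index `y`,
for extended real indices: by convention `V_{−∞} = V_{+∞} = 0`, so the rank is `0`
unless both `x` and `y` are real (with `x ≤ y`). -/
noncomputable def erank (V : PersMod.{u, 0, w₁} k ℝ) (x y : EReal) : ℤ :=
  if h : ∃ s t : ℝ, (s : EReal) = x ∧ (t : EReal) = y ∧ s ≤ t then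
    (Module.finrank k (LinearMap.range (V.map h.choose_spec.choose_spec.2.2)) : ℤ)
  else 0

/-- The persistence measure of the rectangle `[a,b] × [c,d]` (for extended reals
`a < b ≤ c < d`), given for a q-tame module by the alternating sum of ranks
`rk(ρ_{cb}) − rk(ρ_{ca}) − rk(ρ_{db}) + rk(ρ_{da})`. -/
noncomputable def persMeasure (V : PersMod.{u, 0, w₁} k ℝ) (a b c d : EReal) : ℤ :=
  erank V b c - erank V a c - erank V b d + erank V a d

/-- The comparison `x < y` of extended reals, augmented with the conventions
`−∞ < −∞` and `+∞ < +∞` used when selecting the outer corners `a`, `d` of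
rectangles. -/
def ltConv (x y : EReal) : Prop :=
  x < y ∨ (x = ⊥ ∧ y = ⊥) ∨ (x = ⊤ ∧ y = ⊤)

/-- The multiplicity `mult_V(p,q)` of the point `(p,q)`, `−∞ ≤ p < q ≤ +∞`, in the
undecorated persistence diagram of `V`: the minimum of the persistence measures
`μ_V([a,b] × [c,d])` over rectangles with `a < p < b < c < q < d` (where the outer
comparisons `a < p` and `q < d` use the conventions `−∞ < −∞`, `+∞ < +∞`). -/
noncomputable def persMult (V : PersMod.{u, 0, w₁} k ℝ) (p q : EReal) : ℕ :=
  sInf {n : ℕ | ∃ (a : EReal) (b c : ℝ) (d : EReal),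
    ltConv a p ∧ p < (b : EReal) ∧ b < c ∧ (c : EReal) < q ∧ ltConv q d ∧
    (n : ℤ) = persMeasure V a b c d}

/-! ### Auxiliary lemmas for the proof -/

open Module LinearMap Submodule in
/-- Rank–nullity for a submodule: the dimension of the image of a
finite-dimensional submodule plus the dimension of its intersection with the
kernel equals its dimension. -/
lemma finrank_map_add_finrank_inf_ker' {M N : Type*} [AddCommGroup M] [Module k M]
    [AddCommGroup N] [Module k N] (P : Submodule k M) [FiniteDimensional k P]
    (g : M →ₗ[k] N) :
    Module.finrank k (P.map g) + Module.finrank k ↥(P ⊓ LinearMap.ker g)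
      = Module.finrank k P := by
  have h := LinearMap.finrank_range_add_finrank_ker (g.domRestrict P)
  rw [LinearMap.range_domRestrict] at h
  rw [← h]
  congr 1
  rw [LinearMap.ker_domRestrict, ← Submodule.map_comap_subtype]
  exact ((Submodule.equivMapOfInjective P.subtype (Submodule.injective_subtype P)
    _).finrank_eq).symm

open Module in
/-- The core linear-algebra inequality behind the box lemma. -/
lemma core_ineq {M N : Type*} [AddCommGroup M] [Module k M] [AddCommGroup N] [Module k N]
    (g : M →ₗ[k] N) (B' A' K' : Submodule k M) (B A K : Submodule k N)
    [FiniteDimensional k B] [FiniteDimensional k B']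
    (hAB : A ≤ B) (hAB' : A' ≤ B')
    (h1 : ∀ y ∈ B ⊓ K, ∃ x ∈ B' ⊓ K', g x = y)
    (h2 : A'.map g ≤ A) :
    (finrank k ↥(B ⊓ K) : ℤ) - (finrank k ↥(A ⊓ K) : ℤ)
      ≤ (finrank k ↥(B' ⊓ K') : ℤ) - (finrank k ↥(A' ⊓ K') : ℤ) := by
  classical
  set S : Submodule k M := B' ⊓ K' ⊓ Submodule.comap g (B ⊓ K) with hSdef
  haveI : FiniteDimensional k ↥(B ⊓ K) := Submodule.finiteDimensional_of_le inf_le_left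
  haveI : FiniteDimensional k ↥(B' ⊓ K') := Submodule.finiteDimensional_of_le inf_le_left
  haveI : FiniteDimensional k ↥S :=
    Submodule.finiteDimensional_of_le (inf_le_left.trans inf_le_left)
  have hmapS : S.map g = B ⊓ K := by
    apply le_antisymm
    · rintro y ⟨x, hx, rfl⟩
      exact hx.2
    · intro y hy
      obtain ⟨x, hx, hgx⟩ := h1 y hy
      exact ⟨x, ⟨hx, Submodule.mem_comap.mpr (by rw [hgx]; exact hy)⟩, hgx⟩
  set π : N →ₗ[k] N ⧸ (A ⊓ K) := (A ⊓ K).mkQ with hπ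
  set π' : M →ₗ[k] M ⧸ (A' ⊓ K') := (A' ⊓ K').mkQ with hπ'
  have hAK_BK : A ⊓ K ≤ B ⊓ K := inf_le_inf hAB le_rfl
  have e1 := finrank_map_add_finrank_inf_ker' (B ⊓ K) π
  have hkerπ : (B ⊓ K) ⊓ LinearMap.ker π = A ⊓ K := by
    rw [hπ, Submodule.ker_mkQ]
    exact inf_eq_right.mpr hAK_BK
  rw [hkerπ] at e1
  have hcomp : (B ⊓ K).map π = S.map (π ∘ₗ g) := by
    rw [← hmapS]
    exact (Submodule.map_comp g π S).symm
  rw [hcomp] at e1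
  have e2 := finrank_map_add_finrank_inf_ker' S (π ∘ₗ g)
  have e3 : finrank k ↥(S ⊓ (A' ⊓ K')) ≤ finrank k ↥(S ⊓ LinearMap.ker (π ∘ₗ g)) := by
    haveI : FiniteDimensional k ↥(S ⊓ LinearMap.ker (π ∘ₗ g)) :=
      Submodule.finiteDimensional_of_le inf_le_left
    apply Submodule.finrank_mono
    refine le_inf inf_le_left ?_
    rintro x ⟨hxS, hxA'⟩
    have hgA : g x ∈ A := h2 ⟨x, hxA'.1, rfl⟩
    have hgK : g x ∈ K := (Submodule.mem_comap.mp hxS.2).2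
    show (π ∘ₗ g) x ∈ (⊥ : Submodule k _)
    rw [Submodule.mem_bot, LinearMap.comp_apply, hπ, Submodule.mkQ_apply]
    exact (Submodule.Quotient.mk_eq_zero _).mpr ⟨hgA, hgK⟩
  have e4 := finrank_map_add_finrank_inf_ker' S π'
  have hkerπ' : S ⊓ LinearMap.ker π' = S ⊓ (A' ⊓ K') := by rw [hπ', Submodule.ker_mkQ]
  rw [hkerπ'] at e4
  have e6 := finrank_map_add_finrank_inf_ker' (B' ⊓ K') π'
  have hker2 : (B' ⊓ K') ⊓ LinearMap.ker π' = A' ⊓ K' := by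
    rw [hπ', Submodule.ker_mkQ]
    exact inf_eq_right.mpr (inf_le_inf hAB' le_rfl)
  rw [hker2] at e6
  have e5 : finrank k ↥(S.map π') ≤ finrank k ↥((B' ⊓ K').map π') := by
    haveI : FiniteDimensional k ↥((B' ⊓ K').map π') := Module.Finite.map _ _
    exact Submodule.finrank_mono (Submodule.map_mono inf_le_left)
  omega

/-- Proof-irrelevance congruence for ranks of structure maps. -/
lemma rank_congr_pers (V : PersMod.{u, 0, w₁} k ℝ) {s t s' t' : ℝ} (hs : s = s') (ht : t = t')
    (h : s ≤ t) (h' : s' ≤ t') :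
    Module.finrank k (LinearMap.range (V.map h)) = Module.finrank k (LinearMap.range (V.map h')) := by
  subst hs; subst ht; rfl

lemma erank_coe (V : PersMod.{u, 0, w₁} k ℝ) {s t : ℝ} (hst : s ≤ t) :
    erank V (s : EReal) (t : EReal) = (Module.finrank k (LinearMap.range (V.map hst)) : ℤ) := by
  have hex : ∃ s' t' : ℝ, (s' : EReal) = (s : EReal) ∧ (t' : EReal) = (t : EReal) ∧ s' ≤ t' :=
    ⟨s, t, rfl, rfl, hst⟩
  unfold erank
  rw [dif_pos hex]
  have hs : hex.choose = s := by exact_mod_cast hex.choose_spec.choose_spec.1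
  have ht : hex.choose_spec.choose = t := by exact_mod_cast hex.choose_spec.choose_spec.2.1
  exact_mod_cast rank_congr_pers V hs ht hex.choose_spec.choose_spec.2.2 hst

lemma erank_bot (V : PersMod.{u, 0, w₁} k ℝ) (y : EReal) : erank V ⊥ y = 0 := by
  unfold erank
  rw [dif_neg]
  rintro ⟨s, t, hs, -, -⟩
  exact EReal.coe_ne_bot s hs

lemma erank_top (V : PersMod.{u, 0, w₁} k ℝ) (x : EReal) : erank V x ⊤ = 0 := by
  unfold erank
  rw [dif_neg]
  rintro ⟨s, t, -, ht, -⟩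
  exact EReal.coe_ne_top t ht

lemma fd_range (V : PersMod.{u, 0, w₁} k ℝ) (hV : QTame V) {s t : ℝ} (h : s < t) :
    FiniteDimensional k ↥(LinearMap.range (V.map h.le)) :=
  Module.rank_lt_aleph0_iff.mp (hV h)

lemma range_comp_eq (V : PersMod.{u, 0, w₁} k ℝ) {s u' t : ℝ} (h1 : s ≤ u') (h2 : u' ≤ t) :
    LinearMap.range (V.map (h1.trans h2))
      = (LinearMap.range (V.map h1)).map (V.map h2) := by
  rw [← V.map_comp h1 h2, LinearMap.range_comp]

lemma range_le_range (V : PersMod.{u, 0, w₁} k ℝ) {s u' t : ℝ} (h1 : s ≤ u') (h2 : u' ≤ t) :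
    LinearMap.range (V.map (h1.trans h2)) ≤ LinearMap.range (V.map h2) := by
  rw [range_comp_eq V h1 h2]
  exact (Submodule.map_mono le_top).trans (Submodule.map_top _).le

/-! ### Expressing persistence measures via subquotient dimensions -/

lemma shape_rr (V : PersMod.{u, 0, w₁} k ℝ) (hV : QTame V) {a b c d : ℝ}
    (hab : a ≤ b) (hbc : b < c) (hcd : c < d) :
    persMeasure V (a : EReal) (b : EReal) (c : EReal) (d : EReal)
      = (Module.finrank k ↥(LinearMap.range (V.map hbc.le) ⊓ LinearMap.ker (V.map hcd.le)) : ℤ)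
        - (Module.finrank k ↥(LinearMap.range (V.map (hab.trans hbc.le)) ⊓
            LinearMap.ker (V.map hcd.le)) : ℤ) := by
  have e1 := erank_coe V hbc.le
  have e2 := erank_coe V (hab.trans hbc.le)
  have e3 := erank_coe V (hbc.le.trans hcd.le)
  have e4 := erank_coe V ((hab.trans hbc.le).trans hcd.le)
  have r3 := range_comp_eq V hbc.le hcd.le
  have r4 := range_comp_eq V (hab.trans hbc.le) hcd.le
  haveI : FiniteDimensional k ↥(LinearMap.range (V.map hbc.le)) := fd_range V hV hbc
  haveI : FiniteDimensional k ↥(LinearMap.range (V.map (hab.trans hbc.le))) :=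
    fd_range V hV (hab.trans_lt hbc)
  have q1 := finrank_map_add_finrank_inf_ker' (LinearMap.range (V.map hbc.le)) (V.map hcd.le)
  have q2 := finrank_map_add_finrank_inf_ker'
    (LinearMap.range (V.map (hab.trans hbc.le))) (V.map hcd.le)
  unfold persMeasure
  rw [e1, e2, e3, e4, r3, r4]
  omega

lemma shape_br (V : PersMod.{u, 0, w₁} k ℝ) (hV : QTame V) {b c d : ℝ}
    (hbc : b < c) (hcd : c < d) :
    persMeasure V ⊥ (b : EReal) (c : EReal) (d : EReal)
      = (Module.finrank k ↥(LinearMap.range (V.map hbc.le) ⊓ LinearMap.ker (V.map hcd.le)) : ℤ)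
        - (Module.finrank k ↥((⊥ : Submodule k (V.space c)) ⊓ LinearMap.ker (V.map hcd.le)) : ℤ) := by
  have e1 := erank_coe V hbc.le
  have e3 := erank_coe V (hbc.le.trans hcd.le)
  have r3 := range_comp_eq V hbc.le hcd.le
  haveI : FiniteDimensional k ↥(LinearMap.range (V.map hbc.le)) := fd_range V hV hbc
  have q1 := finrank_map_add_finrank_inf_ker' (LinearMap.range (V.map hbc.le)) (V.map hcd.le)
  have hb0 : Module.finrank k ↥((⊥ : Submodule k (V.space c)) ⊓ LinearMap.ker (V.map hcd.le)) = 0 := by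
    rw [bot_inf_eq]
    exact finrank_bot k _
  unfold persMeasure
  simp only [erank_bot]
  rw [e1, e3, r3, hb0]
  omega

lemma shape_rt (V : PersMod.{u, 0, w₁} k ℝ) {a b c : ℝ} (hab : a ≤ b) (hbc : b < c) :
    persMeasure V (a : EReal) (b : EReal) (c : EReal) ⊤
      = (Module.finrank k ↥(LinearMap.range (V.map hbc.le) ⊓ (⊤ : Submodule k (V.space c))) : ℤ)
        - (Module.finrank k ↥(LinearMap.range (V.map (hab.trans hbc.le)) ⊓
            (⊤ : Submodule k (V.space c))) : ℤ) := by
  have e1 := erank_coe V hbc.le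
  have e2 := erank_coe V (hab.trans hbc.le)
  unfold persMeasure
  simp only [erank_top]
  rw [e1, e2, inf_top_eq, inf_top_eq]
  omega

lemma shape_bt (V : PersMod.{u, 0, w₁} k ℝ) {b c : ℝ} (hbc : b < c) :
    persMeasure V ⊥ (b : EReal) (c : EReal) ⊤
      = (Module.finrank k ↥(LinearMap.range (V.map hbc.le) ⊓ (⊤ : Submodule k (V.space c))) : ℤ)
        - (Module.finrank k ↥((⊥ : Submodule k (V.space c)) ⊓ (⊤ : Submodule k (V.space c))) : ℤ) := by
  have e1 := erank_coe V hbc.le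
  have hb0 : Module.finrank k ↥((⊥ : Submodule k (V.space c)) ⊓ (⊤ : Submodule k (V.space c))) = 0 := by
    rw [bot_inf_eq]
    exact finrank_bot k _
  unfold persMeasure
  simp only [erank_top, erank_bot]
  rw [e1, inf_top_eq, hb0]
  omega

/-- Nonnegativity of the persistence measure on admissible rectangles. -/
lemma measure_nonneg (V : PersMod.{u, 0, w₁} k ℝ) (hV : QTame V) {b c : ℝ} (hbc : b < c)
    {a d : EReal} (ha : a = ⊥ ∨ ∃ r : ℝ, a = (r : EReal) ∧ r ≤ b)
    (hd : d = ⊤ ∨ ∃ r : ℝ, d = (r : EReal) ∧ c < r) :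
    0 ≤ persMeasure V a b c d := by
  haveI : FiniteDimensional k ↥(LinearMap.range (V.map hbc.le)) := fd_range V hV hbc
  rcases ha with rfl | ⟨r, rfl, hrb⟩ <;> rcases hd with rfl | ⟨s, rfl, hcs⟩
  · rw [shape_bt V hbc]
    have : Module.finrank k ↥((⊥ : Submodule k (V.space c)) ⊓ (⊤ : Submodule k (V.space c))) = 0 := by
      rw [bot_inf_eq]; exact finrank_bot k _
    omega
  · rw [shape_br V hV hbc hcs]
    have : Module.finrank k
        ↥((⊥ : Submodule k (V.space c)) ⊓ LinearMap.ker (V.map hcs.le)) = 0 := by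
      rw [bot_inf_eq]; exact finrank_bot k _
    omega
  · rw [shape_rt V hrb hbc]
    haveI : FiniteDimensional k
        ↥(LinearMap.range (V.map hbc.le) ⊓ (⊤ : Submodule k (V.space c))) :=
      Submodule.finiteDimensional_of_le inf_le_left
    have := Submodule.finrank_mono
      (inf_le_inf (range_le_range V hrb hbc.le) (le_refl (⊤ : Submodule k (V.space c))))
    omega
  · rw [shape_rr V hV hrb hbc hcs]
    haveI : FiniteDimensional k
        ↥(LinearMap.range (V.map hbc.le) ⊓ LinearMap.ker (V.map hcs.le)) :=
      Submodule.finiteDimensional_of_le inf_le_left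
    have := Submodule.finrank_mono
      (inf_le_inf (range_le_range V hrb hbc.le) (le_refl (LinearMap.ker (V.map hcs.le))))
    omega

/-! ### Pointwise facts about ob-morphisms -/

lemma obhom_factor_right {V : PersMod.{u, 0, w₁} k ℝ} {W : PersMod.{u, 0, w₂} k ℝ}
    (φ : ObHom V W) {s u' t : ℝ} (hsu : s < u') (hut : u' ≤ t) (x : V.space s) :
    φ.map (hsu.trans_le hut) x = W.map hut (φ.map hsu x) := by
  have h := LinearMap.congr_fun (φ.compat (le_refl s) hsu hut) x
  simp only [LinearMap.coe_comp, Function.comp_apply, V.map_refl, LinearMap.id_coe, id_eq] at h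
  exact h

lemma obhom_factor_left {V : PersMod.{u, 0, w₁} k ℝ} {W : PersMod.{u, 0, w₂} k ℝ}
    (φ : ObHom V W) {s u' t : ℝ} (hsu : s ≤ u') (hut : u' < t) (x : V.space s) :
    φ.map (hsu.trans_lt hut) x = φ.map hut (V.map hsu x) := by
  have h := LinearMap.congr_fun (φ.compat hsu hut (le_refl t)) x
  simp only [LinearMap.coe_comp, Function.comp_apply, W.map_refl, LinearMap.id_coe, id_eq] at h
  exact h

lemma inv_comp₁ {V : PersMod.{u, 0, w₁} k ℝ} {W : PersMod.{u, 0, w₂} k ℝ}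
    {φ : ObHom V W} {ψ : ObHom W V} (hinv : ObInverse φ ψ) {s u' t : ℝ}
    (h₁ : s < u') (h₂ : u' < t) (x : V.space s) :
    ψ.map h₂ (φ.map h₁ x) = V.map (h₁.trans h₂).le x := by
  have h := LinearMap.congr_fun (hinv.1 h₁ h₂) x
  simpa using h

/-! ### The two transfer conditions for the core inequality -/

lemma h1_full {V : PersMod.{u, 0, w₁} k ℝ} {W : PersMod.{u, 0, w₂} k ℝ}
    (φ : ObHom V W) (ψ : ObHom W V) (hinv : ObInverse φ ψ)
    {b B C c d D : ℝ} (hbB : b < B) (hBC : B ≤ C) (hCc : C < c)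
    (hbc : b ≤ c) (hcd : c < d) (hbd : b ≤ d) (hdD : d < D) (hCD : C ≤ D) :
    ∀ y ∈ LinearMap.range (V.map hbc) ⊓ LinearMap.ker (V.map hcd.le),
      ∃ x ∈ LinearMap.range (W.map hBC) ⊓ LinearMap.ker (W.map hCD),
        ψ.map hCc x = y := by
  rintro y ⟨⟨w, rfl⟩, hk⟩
  have hk' : V.map hcd.le (V.map hbc w) = 0 := LinearMap.mem_ker.mp hk
  refine ⟨W.map hBC (φ.map hbB w), ⟨⟨φ.map hbB w, rfl⟩, ?_⟩, ?_⟩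
  · show W.map hCD (W.map hBC (φ.map hbB w)) = 0
    have e1 : W.map hCD (W.map hBC (φ.map hbB w))
        = W.map (hBC.trans hCD) (φ.map hbB w) := W.map_map hBC hCD _
    have e2 : W.map (hBC.trans hCD) (φ.map hbB w)
        = φ.map (hbB.trans_le (hBC.trans hCD)) w :=
      (obhom_factor_right φ hbB (hBC.trans hCD) w).symm
    have e3 : φ.map (hbB.trans_le (hBC.trans hCD)) w = φ.map hdD (V.map hbd w) :=
      obhom_factor_left φ hbd hdD w
    have e4 : V.map hbd w = V.map hcd.le (V.map hbc w) := (V.map_map hbc hcd.le w).symm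
    rw [e1, e2, e3, e4, hk', map_zero]
  · have e1 : W.map hBC (φ.map hbB w) = φ.map (hbB.trans_le hBC) w :=
      (obhom_factor_right φ hbB hBC w).symm
    rw [e1]
    have e2 : ψ.map hCc (φ.map (hbB.trans_le hBC) w)
        = V.map ((hbB.trans_le hBC).trans hCc).le w := inv_comp₁ hinv _ _ w
    rw [e2]

lemma h1_top {V : PersMod.{u, 0, w₁} k ℝ} {W : PersMod.{u, 0, w₂} k ℝ}
    (φ : ObHom V W) (ψ : ObHom W V) (hinv : ObInverse φ ψ)
    {b B C c : ℝ} (hbB : b < B) (hBC : B ≤ C) (hCc : C < c) (hbc : b ≤ c)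
    (KN : Submodule k (V.space c)) :
    ∀ y ∈ LinearMap.range (V.map hbc) ⊓ KN,
      ∃ x ∈ LinearMap.range (W.map hBC) ⊓ (⊤ : Submodule k (W.space C)),
        ψ.map hCc x = y := by
  rintro y ⟨⟨w, rfl⟩, -⟩
  refine ⟨W.map hBC (φ.map hbB w), ⟨⟨φ.map hbB w, rfl⟩, trivial⟩, ?_⟩
  have e1 : W.map hBC (φ.map hbB w) = φ.map (hbB.trans_le hBC) w :=
    (obhom_factor_right φ hbB hBC w).symm
  rw [e1]
  have e2 : ψ.map hCc (φ.map (hbB.trans_le hBC) w)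
      = V.map ((hbB.trans_le hBC).trans hCc).le w := inv_comp₁ hinv _ _ w
  rw [e2]

lemma h2_real {V : PersMod.{u, 0, w₁} k ℝ} {W : PersMod.{u, 0, w₂} k ℝ}
    (φ : ObHom V W) (ψ : ObHom W V) (_hinv : ObInverse φ ψ)
    {A a C c : ℝ} (hAa : A < a) (hac : a ≤ c) (hAC : A ≤ C) (hCc : C < c) :
    (LinearMap.range (W.map hAC)).map (ψ.map hCc) ≤ LinearMap.range (V.map hac) := by
  rintro x ⟨y, ⟨z, rfl⟩, rfl⟩
  refine ⟨ψ.map hAa z, ?_⟩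
  have e1 : ψ.map (hAa.trans_le hac) z = V.map hac (ψ.map hAa z) :=
    obhom_factor_right ψ hAa hac z
  have e2 : ψ.map (hAC.trans_lt hCc) z = ψ.map hCc (W.map hAC z) :=
    obhom_factor_left ψ hAC hCc z
  rw [← e1, ← e2]

/-! ### Choosing corners -/

lemma left_corner {p : EReal} {b : ℝ} (hpb : p < (b : EReal)) :
    ∃ a : EReal, ltConv a p ∧ (a = ⊥ ∨ ∃ r : ℝ, a = (r : EReal) ∧ r ≤ b) := by
  induction p using EReal.rec with
  | bot => exact ⟨⊥, Or.inr (Or.inl ⟨rfl, rfl⟩), Or.inl rfl⟩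
  | coe r =>
      refine ⟨((r - 1 : ℝ) : EReal), Or.inl ?_, Or.inr ⟨r - 1, rfl, ?_⟩⟩
      · exact_mod_cast sub_one_lt r
      · have : r < b := by exact_mod_cast hpb
        linarith
  | top => exact absurd hpb (by simp)

lemma right_corner {q : EReal} {c : ℝ} (hcq : (c : EReal) < q) :
    ∃ d : EReal, ltConv q d ∧ (d = ⊤ ∨ ∃ r : ℝ, d = (r : EReal) ∧ c < r) := by
  induction q using EReal.rec with
  | bot => exact absurd hcq (by simp)
  | coe r =>
      refine ⟨((r + 1 : ℝ) : EReal), Or.inl ?_, Or.inr ⟨r + 1, rfl, ?_⟩⟩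
      · exact_mod_cast lt_add_one r
      · have : c < r := by exact_mod_cast hcq
        linarith
  | top => exact ⟨⊤, Or.inr (Or.inr ⟨rfl, rfl⟩), Or.inl rfl⟩

lemma set_nonempty (V : PersMod.{u, 0, w₁} k ℝ) (hV : QTame V) {p q : EReal} (hpq : p < q) :
    {n : ℕ | ∃ (a : EReal) (b c : ℝ) (d : EReal),
      ltConv a p ∧ p < (b : EReal) ∧ b < c ∧ (c : EReal) < q ∧ ltConv q d ∧
      (n : ℤ) = persMeasure V a b c d}.Nonempty := by
  obtain ⟨b, hpb, hbq⟩ := EReal.exists_between_coe_real hpq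
  obtain ⟨c, hbc, hcq⟩ := EReal.exists_between_coe_real hbq
  have hbc' : b < c := by exact_mod_cast hbc
  obtain ⟨a, hap, ha⟩ := left_corner hpb
  obtain ⟨d, hqd, hd⟩ := right_corner hcq
  have hnn := measure_nonneg V hV hbc' ha hd
  exact ⟨(persMeasure V a b c d).toNat,
    ⟨a, b, c, d, hap, hpb, hbc', hcq, hqd, Int.toNat_of_nonneg hnn⟩⟩

lemma ereal_eq_bot_or_real {A : EReal} (hne : A ≠ ⊤) : A = ⊥ ∨ ∃ r : ℝ, A = (r : EReal) := by
  induction A using EReal.rec with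
  | bot => exact Or.inl rfl
  | coe r => exact Or.inr ⟨r, rfl⟩
  | top => exact absurd rfl hne

lemma ereal_eq_top_or_real {A : EReal} (hne : A ≠ ⊥) : A = ⊤ ∨ ∃ r : ℝ, A = (r : EReal) := by
  induction A using EReal.rec with
  | bot => exact absurd rfl hne
  | coe r => exact Or.inr ⟨r, rfl⟩
  | top => exact Or.inl rfl

/-- The one-sided comparison of multiplicities for ob-isomorphic q-tame modules. -/
lemma persMult_mono (V : PersMod.{u, 0, w₁} k ℝ) (W : PersMod.{u, 0, w₂} k ℝ)
    (hV : QTame V) (hW : QTame W) (φ : ObHom V W) (ψ : ObHom W V)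
    (hinv : ObInverse φ ψ) {p q : EReal} (hpq : p < q) :
    persMult V p q ≤ persMult W p q := by
  have hne := set_nonempty W hW hpq
  have hmem := Nat.sInf_mem hne
  obtain ⟨A, B, C, D, hAp, hpB, hBC, hCq, hqD, hn⟩ := hmem
  obtain ⟨b, hpb, hbB⟩ := EReal.exists_between_coe_real hpB
  have hbB' : b < B := by exact_mod_cast hbB
  obtain ⟨c, hCc, hcq⟩ := EReal.exists_between_coe_real hCq
  have hCc' : C < c := by exact_mod_cast hCc
  have hbc : b < c := hbB'.trans (hBC.trans hCc')
  suffices hkey : ∃ (a d : EReal), ltConv a p ∧ ltConv q d ∧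
      (a = ⊥ ∨ ∃ r : ℝ, a = (r : EReal) ∧ r ≤ b) ∧
      (d = ⊤ ∨ ∃ r : ℝ, d = (r : EReal) ∧ c < r) ∧
      persMeasure V a (b : EReal) (c : EReal) d ≤ persMeasure W A (B : EReal) (C : EReal) D by
    obtain ⟨a, d, h₁, h₂, h₃, h₄, h₅⟩ := hkey
    have hnn := measure_nonneg V hV hbc h₃ h₄
    have hmemV : (persMeasure V a (b : EReal) (c : EReal) d).toNat ∈
        {n : ℕ | ∃ (a : EReal) (b c : ℝ) (d : EReal),
          ltConv a p ∧ p < (b : EReal) ∧ b < c ∧ (c : EReal) < q ∧ ltConv q d ∧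
          (n : ℤ) = persMeasure V a b c d} :=
      ⟨a, b, c, d, h₁, hpb, hbc, hcq, h₂, Int.toNat_of_nonneg hnn⟩
    have hle1 : persMult V p q ≤ (persMeasure V a (b : EReal) (c : EReal) d).toNat :=
      Nat.sInf_le hmemV
    have hle2 : (persMeasure V a (b : EReal) (c : EReal) d).toNat ≤ persMult W p q :=
      Int.toNat_le.mpr (h₅.trans_eq hn.symm)
    exact hle1.trans hle2
  -- resolve the left outer corner
  have hA : A = ⊥ ∨ ∃ r : ℝ, A = (r : EReal) ∧ (r : EReal) < p := by
    rcases hAp with h | ⟨rfl, rfl⟩ | ⟨rfl, rfl⟩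
    · rcases ereal_eq_bot_or_real (hne := (h.trans hpb).ne_top) with rfl | ⟨r, rfl⟩
      · exact Or.inl rfl
      · exact Or.inr ⟨r, rfl, h⟩
    · exact Or.inl rfl
    · exact absurd hpb (by simp)
  -- resolve the right outer corner
  have hD : D = ⊤ ∨ ∃ r : ℝ, D = (r : EReal) ∧ q < (r : EReal) := by
    rcases hqD with h | ⟨rfl, rfl⟩ | ⟨rfl, rfl⟩
    · rcases ereal_eq_top_or_real (hne := ((bot_lt_iff_ne_bot.mpr
          (by rintro rfl; exact absurd hcq (by simp))).trans h).ne') with rfl | ⟨r, rfl⟩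
      · exact Or.inl rfl
      · exact Or.inr ⟨r, rfl, h⟩
    · exact absurd hcq (by simp)
    · exact Or.inl rfl
  haveI : FiniteDimensional k ↥(LinearMap.range (V.map hbc.le)) := fd_range V hV hbc
  haveI : FiniteDimensional k ↥(LinearMap.range (W.map hBC.le)) := fd_range W hW hBC
  rcases hA with rfl | ⟨Ar, rfl, hArp⟩ <;> rcases hD with rfl | ⟨Dr, rfl, hqDr⟩
  · -- A = ⊥, D = ⊤
    rcases eq_or_ne q ⊤ with rfl | hq
    · -- q = ⊤, take d = ⊤
      refine ⟨⊥, ⊤, ?_, Or.inr (Or.inr ⟨rfl, rfl⟩), Or.inl rfl, Or.inl rfl, ?_⟩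
      · rcases eq_or_ne p ⊥ with rfl | hp
        · exact Or.inr (Or.inl ⟨rfl, rfl⟩)
        · exact Or.inl (bot_lt_iff_ne_bot.mpr hp)
      · rw [shape_bt V hbc, shape_bt W hBC]
        exact core_ineq (ψ.map hCc')
          (LinearMap.range (W.map hBC.le)) ⊥ ⊤
          (LinearMap.range (V.map hbc.le)) ⊥ ⊤
          bot_le bot_le
          (h1_top φ ψ hinv hbB' hBC.le hCc' hbc.le ⊤)
          (le_of_eq (Submodule.map_bot _))
    · -- q < ⊤, take d real
      obtain ⟨d, hqd, -⟩ := EReal.exists_between_coe_real hq.lt_top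
      have hcd : c < d := by exact_mod_cast hcq.trans hqd
      refine ⟨⊥, (d : EReal), ?_, Or.inl hqd, Or.inl rfl, Or.inr ⟨d, rfl, hcd⟩, ?_⟩
      · rcases eq_or_ne p ⊥ with rfl | hp
        · exact Or.inr (Or.inl ⟨rfl, rfl⟩)
        · exact Or.inl (bot_lt_iff_ne_bot.mpr hp)
      · rw [shape_br V hV hbc hcd, shape_bt W hBC]
        exact core_ineq (ψ.map hCc')
          (LinearMap.range (W.map hBC.le)) ⊥ ⊤
          (LinearMap.range (V.map hbc.le)) ⊥ (LinearMap.ker (V.map hcd.le))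
          bot_le bot_le
          (h1_top φ ψ hinv hbB' hBC.le hCc' hbc.le (LinearMap.ker (V.map hcd.le)))
          (le_of_eq (Submodule.map_bot _))
  · -- A = ⊥, D real
    obtain ⟨d, hqd, hdDr⟩ := EReal.exists_between_coe_real hqDr
    have hdDr' : d < Dr := by exact_mod_cast hdDr
    have hcd : c < d := by exact_mod_cast hcq.trans hqd
    have hCD : C < Dr := hCc'.trans (hcd.trans hdDr')
    refine ⟨⊥, (d : EReal), ?_, Or.inl hqd, Or.inl rfl, Or.inr ⟨d, rfl, hcd⟩, ?_⟩
    · rcases eq_or_ne p ⊥ with rfl | hp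
      · exact Or.inr (Or.inl ⟨rfl, rfl⟩)
      · exact Or.inl (bot_lt_iff_ne_bot.mpr hp)
    · rw [shape_br V hV hbc hcd, shape_br W hW hBC hCD]
      exact core_ineq (ψ.map hCc')
        (LinearMap.range (W.map hBC.le)) ⊥ (LinearMap.ker (W.map hCD.le))
        (LinearMap.range (V.map hbc.le)) ⊥ (LinearMap.ker (V.map hcd.le))
        bot_le bot_le
        (h1_full φ ψ hinv hbB' hBC.le hCc' hbc.le hcd (hbc.le.trans hcd.le) hdDr' hCD.le)
        (le_of_eq (Submodule.map_bot _))
  · -- A real, D = ⊤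
    obtain ⟨a, hAra, hap⟩ := EReal.exists_between_coe_real hArp
    have hAra' : Ar < a := by exact_mod_cast hAra
    have hab : a ≤ b := le_of_lt (by exact_mod_cast hap.trans hpb)
    have hAB : Ar ≤ B := le_of_lt (by exact_mod_cast hArp.trans (hpb.trans hbB))
    rcases eq_or_ne q ⊤ with rfl | hq
    · refine ⟨(a : EReal), ⊤, Or.inl hap, Or.inr (Or.inr ⟨rfl, rfl⟩),
        Or.inr ⟨a, rfl, hab⟩, Or.inl rfl, ?_⟩
      rw [shape_rt V hab hbc, shape_rt W hAB hBC]
      exact core_ineq (ψ.map hCc')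
        (LinearMap.range (W.map hBC.le)) (LinearMap.range (W.map (hAB.trans hBC.le))) ⊤
        (LinearMap.range (V.map hbc.le)) (LinearMap.range (V.map (hab.trans hbc.le))) ⊤
        (range_le_range V hab hbc.le) (range_le_range W hAB hBC.le)
        (h1_top φ ψ hinv hbB' hBC.le hCc' hbc.le ⊤)
        (h2_real φ ψ hinv hAra' (hab.trans hbc.le) (hAB.trans hBC.le) hCc')
    · obtain ⟨d, hqd, -⟩ := EReal.exists_between_coe_real hq.lt_top
      have hcd : c < d := by exact_mod_cast hcq.trans hqd
      refine ⟨(a : EReal), (d : EReal), Or.inl hap, Or.inl hqd,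
        Or.inr ⟨a, rfl, hab⟩, Or.inr ⟨d, rfl, hcd⟩, ?_⟩
      rw [shape_rr V hV hab hbc hcd, shape_rt W hAB hBC]
      exact core_ineq (ψ.map hCc')
        (LinearMap.range (W.map hBC.le)) (LinearMap.range (W.map (hAB.trans hBC.le))) ⊤
        (LinearMap.range (V.map hbc.le)) (LinearMap.range (V.map (hab.trans hbc.le)))
        (LinearMap.ker (V.map hcd.le))
        (range_le_range V hab hbc.le) (range_le_range W hAB hBC.le)
        (h1_top φ ψ hinv hbB' hBC.le hCc' hbc.le (LinearMap.ker (V.map hcd.le)))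
        (h2_real φ ψ hinv hAra' (hab.trans hbc.le) (hAB.trans hBC.le) hCc')
  · -- A real, D real
    obtain ⟨a, hAra, hap⟩ := EReal.exists_between_coe_real hArp
    have hAra' : Ar < a := by exact_mod_cast hAra
    have hab : a ≤ b := le_of_lt (by exact_mod_cast hap.trans hpb)
    have hAB : Ar ≤ B := le_of_lt (by exact_mod_cast hArp.trans (hpb.trans hbB))
    obtain ⟨d, hqd, hdDr⟩ := EReal.exists_between_coe_real hqDr
    have hdDr' : d < Dr := by exact_mod_cast hdDr
    have hcd : c < d := by exact_mod_cast hcq.trans hqd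
    have hCD : C < Dr := hCc'.trans (hcd.trans hdDr')
    refine ⟨(a : EReal), (d : EReal), Or.inl hap, Or.inl hqd,
      Or.inr ⟨a, rfl, hab⟩, Or.inr ⟨d, rfl, hcd⟩, ?_⟩
    rw [shape_rr V hV hab hbc hcd, shape_rr W hW hAB hBC hCD]
    exact core_ineq (ψ.map hCc')
      (LinearMap.range (W.map hBC.le)) (LinearMap.range (W.map (hAB.trans hBC.le)))
      (LinearMap.ker (W.map hCD.le))
      (LinearMap.range (V.map hbc.le)) (LinearMap.range (V.map (hab.trans hbc.le)))
      (LinearMap.ker (V.map hcd.le))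
      (range_le_range V hab hbc.le) (range_le_range W hAB hBC.le)
      (h1_full φ ψ hinv hbB' hBC.le hCc' hbc.le hcd (hbc.le.trans hcd.le) hdDr' hCD.le)
      (h2_real φ ψ hinv hAra' (hab.trans hbc.le) (hAB.trans hBC.le) hCc')
/-- the undecorated persistence diagram of a q-tame persistence
module over the real line is an observable invariant: ob-isomorphic q-tame
modules have the same multiplicity function `mult(p, q)` for all
`−∞ ≤ p < q ≤ +∞`. -/
theorem persistence_diagram_observable
    (V : PersMod.{u, 0, w₁} k ℝ) (W : PersMod.{u, 0, w₂} k ℝ)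
    (hV : QTame V) (hW : QTame W) (h : ObIsomorphic V W) :
    ∀ p q : EReal, p < q → persMult V p q = persMult W p q := by
  obtain ⟨φ, ψ, hinv⟩ := h
  intro p q hpq
  exact le_antisymm (persMult_mono V W hV hW φ ψ hinv hpq)
    (persMult_mono W V hW hV ψ φ ⟨hinv.2, hinv.1⟩ hpq)
end
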